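/- arXiv:1002.3721 — 7 statements merged into one kernel-verified Lean document; each statement's English description precedes it below -/
import Mathlib

section
/- If f : ℝ → ℝ satisfies f(x+y) = f(x) + f(y) for all x, y ∈ ℝ and f is Lebesgue integrable on some compact interval [a, b] with a < b, then there exists c ∈ ℝ such that f(x) = c·x for all x ∈ ℝ. -/
open MeasureTheory

theorem stmt_1 (f : ℝ → ℝ) (hf : ∀ x y, f (x + y) = f x + f y)
    (a b : ℝ) (hab : a < b) (hint : IntegrableOn f (Set.Icc a b)) :
    ∃ c : ℝ, ∀ x, f x = c * x := by
  have h0 : IntervalIntegrable f volume a b :=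
    (intervalIntegrable_iff_integrableOn_Icc_of_le hab.le).2 hint
  -- translation invariance
  have htrans : ∀ s : ℝ, IntervalIntegrable f volume (a + s) (b + s) := by
    intro s
    have h1 : IntervalIntegrable (fun x => f (x - s)) volume (a + s) (b + s) :=
      h0.comp_sub_right s
    have h2 : IntervalIntegrable (fun x => f (x - s) + f s) volume (a + s) (b + s) :=
      h1.add (intervalIntegrable_const)
    have : (fun x => f (x - s) + f s) = f := by
      funext x; rw [← hf, sub_add_cancel]
    rwa [this] at h2
  have hstep : ∀ c : ℝ, IntervalIntegrable f volume c (c + (b - a)) := by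
    intro c
    have := htrans (c - a)
    rwa [show a + (c - a) = c by ring, show b + (c - a) = c + (b - a) by ring] at this
  have hiter : ∀ (n : ℕ) (c : ℝ), IntervalIntegrable f volume c (c + n * (b - a)) := by
    intro n
    induction n with
    | zero => intro c; simp
    | succ k ih =>
      intro c
      have h1 := ih c
      have h2 := hstep (c + k * (b - a))
      have h3 := h1.trans h2
      rwa [show c + ↑k * (b - a) + (b - a) = c + ↑(k + 1) * (b - a) by push_cast; ring] at h3
  have hall : ∀ c d : ℝ, IntervalIntegrable f volume c d := by
    have key : ∀ c d : ℝ, c ≤ d → IntervalIntegrable f volume c d := by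
      intro c d hcd
      obtain ⟨n, hn⟩ := Archimedean.arch (d - c) (sub_pos.2 hab)
      have hn' : d ≤ c + n * (b - a) := by
        have : (n : ℝ) * (b - a) = n • (b - a) := by simp
        linarith [hn, this ▸ hn]
      refine (hiter n c).mono_set ?_
      rw [Set.uIcc_of_le hcd, Set.uIcc_of_le (by nlinarith [sub_pos.2 hab] : c ≤ c + n * (b - a))]
      exact Set.Icc_subset_Icc le_rfl hn'
    intro c d
    rcases le_total c d with h | h
    · exact key c d h
    · exact (key d c h).symm
  -- primitive
  set F : ℝ → ℝ := fun x => ∫ t in (0:ℝ)..x, f t with hF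
  have hFcont : Continuous F := intervalIntegral.continuous_primitive (fun c d => hall c d) 0
  -- key identity
  have hid : ∀ y : ℝ, f y = F (1 + y) - F y - F 1 := by
    intro y
    have e1 : (∫ t in (0:ℝ)..1, f (t + y)) = ∫ t in (0:ℝ)+y..(1:ℝ)+y, f t :=
      intervalIntegral.integral_comp_add_right f y
    have e2 : (∫ t in (0:ℝ)..1, f (t + y)) = F 1 + f y := by
      have : (fun t => f (t + y)) = fun t => f t + f y := by
        funext t; exact hf t y
      rw [this, intervalIntegral.integral_add (hall 0 1) intervalIntegrable_const,
        intervalIntegral.integral_const]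
      simp [hF]
    have e3 : (∫ t in (0:ℝ)+y..(1:ℝ)+y, f t) = F (1 + y) - F y := by
      have := intervalIntegral.integral_add_adjacent_intervals (hall 0 y) (hall y (1 + y))
      rw [zero_add]
      have hFy : F (1 + y) = F y + ∫ t in y..(1+y), f t := by
        rw [hF]; simp only; rw [← this]
      linarith [hFy]
    have := e1.symm.trans e2
    rw [e3] at this
    linarith
  have hcont : Continuous f := by
    have : f = fun y => F (1 + y) - F y - F 1 := funext hid
    rw [this]
    fun_prop
  -- additive + continuous ⇒ linear
  let φ : ℝ →+ ℝ := AddMonoidHom.mk' f (fun x y => hf x y)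
  let L := φ.toRealLinearMap hcont
  refine ⟨f 1, fun x => ?_⟩
  have : f x = L x := rfl
  rw [this, show x = x • (1:ℝ) by simp, L.map_smul]
  simp only [smul_eq_mul, mul_one, mul_comm]
  congr 1
end

section
/- Let g : ℝⁿ → ℝ be additive, periodic with respect to a basis u₁,...,uₙ of ℝⁿ (g(x+uₖ) = g(x) for all x, k), and suppose x ↦ exp(i·g(x)) is Lebesgue measurable on the parallelepiped generated by u₁,...,uₙ. Then g ≡ 0. -/
/-!
The function `χ = exp (i g)` is a unitary character of `ℝⁿ`, invariant under the lattice `Λ`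
spanned by the `uₖ`. Since the parallelepiped is a fundamental domain of `Λ` up to a null set,
`χ` is almost everywhere measurable on all of `ℝⁿ`, and such a character is continuous:
`χ ⋆ f = (∫ χ (-u) f u) • χ` for every test function `f`, and some `f` makes the factor
nonzero. Being additive, `g` is `ℚ`-linear, so it vanishes on the dense `ℚ`-span of the
basis; hence `χ ≡ 1` by continuity, i.e. `g` takes values in `2πℤ`, and `ℚ`-linearity forces
`g = 0`.
-/

open MeasureTheory TopologicalSpace
open scoped Convolution Pointwise

@[to_additive]
theorem MeasureTheory.IsFundamentalDomain.aestronglyMeasurable_of_restrict {G α β : Type*}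
    [Group G] [Countable G] [MulAction G α] [MeasurableSpace α] [MeasurableConstSMul G α]
    [TopologicalSpace β] [PseudoMetrizableSpace β] {s : Set α} {μ : Measure α}
    [SMulInvariantMeasure G α μ] (hs : IsFundamentalDomain G s μ) {f : α → β}
    (hf : ∀ (g : G) (x : α), f (g • x) = f x) (hfs : AEStronglyMeasurable f (μ.restrict s)) :
    AEStronglyMeasurable f μ := by
  rw [← hs.sum_restrict, aestronglyMeasurable_sum_measure_iff]
  intro g
  have hmp :
      MeasurePreserving (g⁻¹ • · : α → α) (μ.restrict (g • s)) (μ.restrict s) := by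
    simpa only [Set.preimage_smul, inv_inv] using
      (measurePreserving_smul g⁻¹ μ).restrict_preimage_emb (measurableEmbedding_const_smul _) s
  simpa only [Function.comp_def, hf] using hfs.comp_measurePreserving hmp

theorem convolution_eq_mul_integral_of_map_add {G : Type*} [AddCommGroup G] [MeasurableSpace G]
    [MeasurableAdd G] [MeasurableNeg G] {μ : Measure G} [μ.IsNegInvariant] [μ.IsAddLeftInvariant]
    {χ : G → ℂ} (hχ : ∀ x y, χ (x + y) = χ x * χ y) (f : G → ℂ) (y : G) :
    (χ ⋆[ContinuousLinearMap.mul ℝ ℂ, μ] f) y = χ y * ∫ u, χ (-u) * f u ∂μ := by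
  rw [convolution_def, ← integral_const_mul, ← integral_sub_left_eq_self _ μ y]
  congr 1 with u
  rw [ContinuousLinearMap.mul_apply', sub_sub_cancel, sub_eq_add_neg, hχ, mul_assoc]

section FiniteDimensional

variable {E : Type*} [NormedAddCommGroup E] [NormedSpace ℝ E] [FiniteDimensional ℝ E]
  [MeasurableSpace E] [BorelSpace E] {μ : Measure E} [μ.IsAddHaarMeasure] {χ : E → ℂ}

theorem MeasureTheory.LocallyIntegrable.exists_integral_mul_ne_zero (hloc : LocallyIntegrable χ μ)
    (hχ : ∀ x, χ x ≠ 0) :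
    ∃ f : E → ℂ, Continuous f ∧ HasCompactSupport f ∧ ∫ u, χ u * f u ∂μ ≠ 0 := by
  by_contra! h
  have hzero := ae_eq_zero_of_integral_contDiff_smul_eq_zero hloc fun f hf hfsupp => by
    simpa [Complex.real_smul, mul_comm] using
      h (fun u => f u) (Complex.continuous_ofReal.comp hf.continuous)
        (hfsupp.comp_left Complex.ofReal_zero)
  have : (ae μ).NeBot := ae_neBot.2 (NeZero.ne μ)
  obtain ⟨u, hu⟩ := hzero.exists
  exact hχ u hu

theorem continuous_of_map_add_of_norm_eq_one (hχ : ∀ x y, χ (x + y) = χ x * χ y)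
    (hnorm : ∀ x, ‖χ x‖ = 1) (hmeas : AEStronglyMeasurable χ μ) : Continuous χ := by
  have hloc {ψ : E → ℂ} (hψ : AEStronglyMeasurable ψ μ) (hnorm : ∀ x, ‖ψ x‖ = 1) :
      LocallyIntegrable ψ μ :=
    (memLp_top_of_bound hψ 1 (.of_forall fun x => (hnorm x).le)).locallyIntegrable le_top
  have hloc_neg : LocallyIntegrable (χ <| - ·) μ :=
    hloc (hmeas.comp_measurePreserving (Measure.measurePreserving_neg μ)) fun x => hnorm (-x)
  obtain ⟨f, hf, hfsupp, hC⟩ :=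
    hloc_neg.exists_integral_mul_ne_zero fun x => norm_ne_zero_iff.1 (by simp [hnorm])
  have hconv : Continuous (χ ⋆[ContinuousLinearMap.mul ℝ ℂ, μ] f) :=
    hfsupp.continuous_convolution_right _ (hloc hmeas hnorm) hf
  convert hconv.mul_const (∫ u, χ (-u) * f u ∂μ)⁻¹ using 1
  funext y
  rw [convolution_eq_mul_integral_of_map_add hχ, mul_inv_cancel_right₀ hC]

end FiniteDimensional

theorem Module.Basis.denseRange_sum_ratCast_smul {E ι : Type*} [AddCommGroup E] [Module ℝ E]
    [TopologicalSpace E] [IsTopologicalAddGroup E] [ContinuousSMul ℝ E] [Fintype ι]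
    (b : Module.Basis ι ℝ E) : DenseRange fun q : ι → ℚ => ∑ i, (q i : ℝ) • b i := by
  have hsurj : Function.Surjective fun v : ι → ℝ => ∑ i, v i • b i :=
    fun x => ⟨b.repr x, b.sum_repr x⟩
  exact hsurj.denseRange.comp (DenseRange.piMap fun _ => Rat.denseRange_cast) (by fun_prop)

theorem AddMonoidHom.map_sum_ratCast_smul_eq_zero {E ι : Type*} [AddCommGroup E] [Module ℝ E]
    [Fintype ι] (G : E →+ ℝ) {v : ι → E} (hv : ∀ i, G (v i) = 0) (q : ι → ℚ) :
    G (∑ i, (q i : ℝ) • v i) = 0 := by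
  rw [map_sum]
  exact Finset.sum_eq_zero fun i _ => by rw [map_ratCast_smul G ℝ ℝ, hv, smul_zero]

theorem AddMonoidHom.eq_zero_of_forall_mem_zmultiples {E : Type*} [AddCommGroup E] [Module ℝ E]
    (G : E →+ ℝ) {c : ℝ} (h : ∀ x, G x ∈ AddSubgroup.zmultiples c) : G = 0 := by
  ext x
  rcases eq_or_ne c 0 with rfl | hc
  · simpa using h x
  obtain ⟨m, hm⟩ := AddSubgroup.mem_zmultiples_iff.1 (h x)
  set N : ℕ := m.natAbs + 1
  obtain ⟨k, hk⟩ := AddSubgroup.mem_zmultiples_iff.1 (h ((N : ℝ)⁻¹ • x))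
  have hdiv : G x = N • G ((N : ℝ)⁻¹ • x) := by
    rw [← map_nsmul, ← Nat.cast_smul_eq_nsmul ℝ, smul_inv_smul₀ (by positivity)]
  have hmk : m = N * k := by
    rw [← hm, ← hk, nsmul_eq_mul, zsmul_eq_mul, zsmul_eq_mul, ← mul_assoc] at hdiv
    exact_mod_cast mul_right_cancel₀ hc hdiv
  have hm0 : m = 0 := Int.eq_zero_of_abs_lt_dvd ⟨k, hmk⟩ (by rw [Int.abs_eq_natAbs]; omega)
  simp [← hm, hm0]

theorem Complex.exp_I_mul_ofReal_eq_one {t : ℝ} :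
    Complex.exp (Complex.I * t) = 1 ↔ t ∈ AddSubgroup.zmultiples (2 * Real.pi) := by
  rw [mul_comm, ← Circle.coe_exp, Circle.coe_eq_one, Circle.exp_eq_one,
    AddSubgroup.mem_zmultiples_iff]
  simp [eq_comm]

theorem stmt_7 (n : ℕ) (b : Module.Basis (Fin n) ℝ (EuclideanSpace ℝ (Fin n)))
    (g : EuclideanSpace ℝ (Fin n) → ℝ)
    (hg : ∀ x y, g (x + y) = g x + g y)
    (hper : ∀ (x : EuclideanSpace ℝ (Fin n)) (k : Fin n), g (x + b k) = g x)
    (hmeas : AEMeasurable (fun x => Complex.exp (Complex.I * (g x : ℂ)))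
      (volume.restrict (parallelepiped ⇑b))) :
    ∀ x, g x = 0 := by
  let G : EuclideanSpace ℝ (Fin n) →+ ℝ := AddMonoidHom.mk' g hg
  have hb (k : Fin n) : g (b k) = 0 := by simpa [show g 0 = 0 from G.map_zero] using hper 0 k
  have hlattice : Submodule.span ℤ (Set.range b) ≤ LinearMap.ker G.toIntLinearMap :=
    Submodule.span_le.2 (Set.range_subset_iff.2 hb)
  have hrat (q : Fin n → ℚ) : g (∑ i, (q i : ℝ) • b i) = 0 :=
    G.map_sum_ratCast_smul_eq_zero hb q
  set χ := fun x => Complex.exp (Complex.I * (g x : ℂ))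
  have hχ_meas : AEStronglyMeasurable χ volume := by
    have : Countable (Submodule.span ℤ (Set.range b)).toAddSubgroup :=
      inferInstanceAs (Countable (Submodule.span ℤ (Set.range b)))
    refine (ZSpan.isAddFundamentalDomain' b volume).aestronglyMeasurable_of_restrict
      (fun v x => ?_) ?_
    · have hv : g v = 0 := hlattice v.2
      simp [χ, AddSubgroup.vadd_def, hg, hv]
    · rw [Measure.restrict_congr_set (ZSpan.fundamentalDomain_ae_parallelepiped b volume)]
      exact hmeas.aestronglyMeasurable
  have hχ_cont : Continuous χ := continuous_of_map_add_of_norm_eq_one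
    (fun x y => by simp [χ, hg, mul_add, Complex.exp_add])
    (fun x => by simp [χ, Complex.norm_exp]) hχ_meas
  have hχ_one : χ = 1 := b.denseRange_sum_ratCast_smul.equalizer hχ_cont continuous_const <|
    funext fun q => by simp [χ, hrat]
  have hG : G = 0 := G.eq_zero_of_forall_mem_zmultiples fun x =>
    Complex.exp_I_mul_ofReal_eq_one.1 (congrFun hχ_one x)
  exact DFunLike.congr_fun hG
end

section
/- If f : ℝⁿ → ℝ is additive and x ↦ exp(i·f(x)) is Lebesgue measurable on some compact parallelepiped generated by a basis of ℝⁿ, then there exists c ∈ ℝⁿ such that f(x) = ⟨c, x⟩ for all x ∈ ℝⁿ. -/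
/-!
Writing `θ(x)` for the class of `f x` modulo `2π`, the map `θ` is an additive homomorphism into
the circle `ℝ/2πℤ`, and it is measurable on the parallelepiped because `θ(x) = arg (exp (i f x))`.
By the Steinhaus theorem a homomorphism into a separable normed group that is measurable on a
set of positive Haar measure is continuous, so `θ` is continuous. Near `0` the values of `θ` are
then small, and since `f (q • x) = q * f x` for rational `q ∈ [0, 1]` the values of `f` cannot
wrap around the circle: `f` itself is bounded near `0`, hence continuous and linear, and the
Riesz representation gives `c`.
-/

open MeasureTheory Metric Real Set Filter Topology

theorem exists_subset_measure_pos_dist_lt {α H : Type*} [MeasurableSpace α]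
    [PseudoMetricSpace H] [SecondCountableTopology H] [MeasurableSpace H] [OpensMeasurableSpace H]
    {μ : Measure α} {s : Set α} {g : α → H} (hg : AEMeasurable g (μ.restrict s))
    (hs : MeasurableSet s) (hμs : μ s ≠ 0) {ε : ℝ} (hε : 0 < ε) :
    ∃ S ⊆ s, MeasurableSet S ∧ 0 < μ S ∧ ∀ a ∈ S, ∀ b ∈ S, dist (g a) (g b) < ε := by
  have hmap : (μ.restrict s).map g ≠ 0 := by
    rwa [Ne, Measure.map_eq_zero_iff hg, Measure.restrict_eq_zero]
  obtain ⟨y, hy⟩ := Measure.nonempty_support hmap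
  have hball : 0 < μ.restrict s (g ⁻¹' ball y (ε / 2)) := by
    rw [← Measure.map_apply_of_aemeasurable hg measurableSet_ball]
    exact (Measure.mem_support_iff_forall y).1 hy _ (ball_mem_nhds y (half_pos hε))
  obtain ⟨t, hts, ht, hteq⟩ :=
    (hg.nullMeasurable measurableSet_ball).exists_measurable_subset_ae_eq
  refine ⟨t ∩ s, inter_subset_right, ht.inter hs, ?_, fun a ha b hb => ?_⟩
  · rwa [← Measure.restrict_apply ht, measure_congr hteq]
  · have ha' : dist (g a) y < ε / 2 := hts ha.1
    have hb' : dist (g b) y < ε / 2 := hts hb.1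
    linarith [dist_triangle_right (g a) (g b) y]

theorem AddMonoidHom.continuous_of_aemeasurable_restrict {G H : Type*} [AddGroup G]
    [TopologicalSpace G] [IsTopologicalAddGroup G] [LocallyCompactSpace G] [MeasurableSpace G]
    [BorelSpace G] (μ : Measure G) [μ.IsAddHaarMeasure] [μ.InnerRegular]
    [SeminormedAddCommGroup H] [SecondCountableTopology H] [MeasurableSpace H]
    [OpensMeasurableSpace H] (φ : G →+ H) {s : Set G} (hs : MeasurableSet s) (hμs : μ s ≠ 0)
    (hφ : AEMeasurable φ (μ.restrict s)) : Continuous φ := by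
  refine continuous_of_continuousAt_zero φ ?_
  rw [ContinuousAt, map_zero, Metric.tendsto_nhds]
  intro ε hε
  obtain ⟨S, -, hSm, hSpos, hS⟩ := exists_subset_measure_pos_dist_lt hφ hs hμs hε
  filter_upwards [Measure.sub_mem_nhds_zero_of_addHaar_pos μ S hSm hSpos]
  rintro _ ⟨a, ha, b, hb, rfl⟩
  rw [map_sub, dist_zero_right, ← dist_eq_norm]
  exact hS a ha b hb

theorem aemeasurable_coe_addCircle_of_aemeasurable_exp {α : Type*} [MeasurableSpace α]
    {μ : Measure α} {f : α → ℝ} (hf : AEMeasurable (fun x => Complex.exp (Complex.I * f x)) μ) :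
    AEMeasurable (fun x => (f x : AddCircle (2 * π))) μ := by
  have harg : ∀ t : ℝ, ((Complex.arg (Complex.exp (Complex.I * t)) : ℝ) : AddCircle (2 * π)) = t :=
    fun t => by
      rw [mul_comm Complex.I, Complex.arg_exp_mul_I]
      exact Real.Angle.coe_toIocMod _ _
  have hmk : Measurable ((↑) : ℝ → AddCircle (2 * π)) := (AddCircle.continuous_mk' _).measurable
  simpa only [Function.comp_def, harg] using hmk.comp_aemeasurable hf.carg

theorem AddCircle.abs_le_of_forall_norm_coe_ratCast_mul_lt {p ε t : ℝ} (hε : ε < |p| / 2)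
    (h : ∀ q : ℚ, 0 ≤ q → q ≤ 1 → ‖((q * t : ℝ) : AddCircle p)‖ < ε) : |t| ≤ ε := by
  by_contra! htε
  have hε0 : 0 < ε := by simpa using h 0 le_rfl zero_le_one
  have ht : 0 < |t| := hε0.trans htε
  have hp : p ≠ 0 := abs_pos.1 (by linarith)
  -- a rational multiple of `t` lands in `(ε, |p| / 2)`, where the norm on the circle is `|·|`
  obtain ⟨q, hεq, hq⟩ : ∃ q : ℚ, ε / |t| < q ∧ (q : ℝ) < min 1 (|p| / 2 / |t|) :=
    exists_rat_btwn (lt_min ((div_lt_one ht).2 htε) (div_lt_div_of_pos_right hε ht))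
  rw [lt_min_iff, lt_div_iff₀ ht] at hq
  rw [div_lt_iff₀ ht] at hεq
  have hq0 : (0 : ℝ) ≤ q := ((pos_iff_pos_of_mul_pos (hε0.trans hεq)).2 ht).le
  have habs : |(q : ℝ) * t| = q * |t| := by rw [abs_mul, abs_of_nonneg hq0]
  have hnorm := h q (by exact_mod_cast hq0) (by exact_mod_cast hq.1.le)
  rw [(AddCircle.norm_coe_eq_abs_iff p hp).2 (by rw [habs]; exact hq.2.le), habs] at hnorm
  linarith

theorem AddMonoidHom.continuous_of_continuous_coe_addCircle {V : Type*}
    [SeminormedAddCommGroup V] [NormedSpace ℝ V] (f : V →+ ℝ) {p : ℝ} (hp : p ≠ 0)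
    (hf : Continuous fun x => (f x : AddCircle p)) : Continuous f := by
  have hsmall : ∀ᶠ x in 𝓝 0, ‖(f x : AddCircle p)‖ < |p| / 4 := by
    have := hf.tendsto 0
    rw [map_zero, QuotientAddGroup.mk_zero] at this
    exact this.norm.eventually_lt_const (by rw [norm_zero]; positivity)
  obtain ⟨r, hr, hball⟩ := Metric.eventually_nhds_iff_ball.1 hsmall
  refine f.continuous_of_isBounded_nhds_zero (ball_mem_nhds 0 hr)
    ((isBounded_closedBall (x := 0) (r := |p| / 4)).subset ?_)
  rintro _ ⟨x, hx, rfl⟩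
  rw [mem_closedBall, dist_zero_right, Real.norm_eq_abs]
  refine AddCircle.abs_le_of_forall_norm_coe_ratCast_mul_lt (p := p)
    (by linarith [abs_pos.2 hp]) fun q hq0 hq1 => ?_
  rw [← smul_eq_mul, ← map_ratCast_smul f ℝ ℝ]
  refine hball _ (mem_ball_zero_iff.2 ?_)
  calc ‖(q : ℝ) • x‖ = q * ‖x‖ := by rw [norm_smul, Real.norm_of_nonneg (by exact_mod_cast hq0)]
    _ ≤ ‖x‖ := mul_le_of_le_one_left (norm_nonneg x) (by exact_mod_cast hq1)
    _ < r := mem_ball_zero_iff.1 hx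

theorem AddMonoidHom.exists_eq_inner_of_continuous {E : Type*} [NormedAddCommGroup E]
    [InnerProductSpace ℝ E] [CompleteSpace E] (f : E →+ ℝ) (hf : Continuous f) :
    ∃ c : E, ∀ x, f x = inner ℝ c x :=
  ⟨(InnerProductSpace.toDual ℝ E).symm (f.toRealLinearMap hf), fun x => by simp⟩

theorem stmt_8 (n : ℕ) (f : EuclideanSpace ℝ (Fin n) → ℝ)
    (hf : ∀ x y, f (x + y) = f x + f y)
    (b : Module.Basis (Fin n) ℝ (EuclideanSpace ℝ (Fin n)))
    (hmeas : AEMeasurable (fun x => Complex.exp (Complex.I * (f x : ℂ)))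
      (volume.restrict (parallelepiped ⇑b))) :
    ∃ c : EuclideanSpace ℝ (Fin n), ∀ x, f x = inner ℝ c x := by
  let F : EuclideanSpace ℝ (Fin n) →+ ℝ := AddMonoidHom.mk' f hf
  have hP : MeasurableSet (parallelepiped b) := by
    rw [← b.coe_parallelepiped]
    exact b.parallelepiped.isCompact.measurableSet
  have hPpos : volume (parallelepiped b) ≠ 0 := by
    rw [← b.coe_parallelepiped]
    exact (Measure.measure_pos_of_nonempty_interior _ b.parallelepiped.interior_nonempty).ne'
  have hangle : Continuous fun x => (F x : AddCircle (2 * π)) :=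
    ((QuotientAddGroup.mk' _).comp F).continuous_of_aemeasurable_restrict volume hP hPpos
      (aemeasurable_coe_addCircle_of_aemeasurable_exp hmeas)
  exact F.exists_eq_inner_of_continuous
    (F.continuous_of_continuous_coe_addCircle two_pi_pos.ne' hangle)
end

section
/- If f : ℝ → ℝ is additive and x ↦ exp(i·f(x)) is Lebesgue measurable, then there exists c ∈ ℝ with f(x) = c·x for all x ∈ ℝ. -/
/-!
`g x = exp (i f x)` is a measurable solution of `g (x + y) = g x * g y` with `‖g‖ = 1`, hence
locally integrable. By the Lebesgue differentiation theorem some `C = ∫₀ᵃ g` is nonzero, and then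
`g x * C = ∫ₓˣ⁺ᵃ g` exhibits `g` as a difference of primitives: `g` is continuous, hence
differentiable with `g' = b g`, so `g x = exp (b x)`. Taking imaginary parts, `x ↦ f x - (Im b) x`
is additive with values in `2πℤ`; its image is a divisible subgroup of `2πℤ`, hence trivial.
-/

open MeasureTheory intervalIntegral

theorem exists_intervalIntegral_ne_zero {E : Type*} [NormedAddCommGroup E] [NormedSpace ℝ E]
    [CompleteSpace E] {g : ℝ → E} (hg : LocallyIntegrable g volume) (hg0 : ∀ x, g x ≠ 0) :
    ∃ a, ∫ t in (0 : ℝ)..a, g t ≠ 0 := by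
  by_contra! hzero
  have hprim : (fun x => ∫ t in (0 : ℝ)..x, g t) = fun _ => 0 := funext hzero
  obtain ⟨x, hx⟩ := (LocallyIntegrable.ae_hasDerivAt_integral hg).exists
  have hderiv := hx 0
  rw [hprim] at hderiv
  exact hg0 x (hderiv.unique (hasDerivAt_const x 0))

theorem eq_mul_exp_of_hasDerivAt_mul {g : ℝ → ℂ} {b : ℂ} (hg : ∀ x, HasDerivAt g (b * g x) x)
    (x : ℝ) : g x = g 0 * Complex.exp (b * x) := by
  have hexp (y : ℝ) :
      HasDerivAt (fun y : ℝ => Complex.exp (-(b * y))) (-b * Complex.exp (-(b * y))) y := by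
    simpa [mul_comm] using (((hasDerivAt_id y).ofReal_comp.const_mul b).neg).cexp
  have hconst (y : ℝ) : HasDerivAt (fun y : ℝ => g y * Complex.exp (-(b * y))) 0 y :=
    ((hg y).fun_mul (hexp y)).congr_deriv (by ring)
  have h := is_const_of_deriv_eq_zero (fun y => (hconst y).differentiableAt)
    (fun y => (hconst y).deriv) x 0
  simp only [Complex.ofReal_zero, mul_zero, neg_zero, Complex.exp_zero, mul_one] at h
  rw [← h, mul_assoc, ← Complex.exp_add, neg_add_cancel, Complex.exp_zero, mul_one]

section CauchyExponential

variable {g : ℝ → ℂ}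

theorem mul_intervalIntegral_eq_of_map_add_eq_mul (hmul : ∀ x y, g (x + y) = g x * g y)
    (x a : ℝ) : g x * ∫ t in (0 : ℝ)..a, g t = ∫ t in x..x + a, g t := by
  simp_rw [← intervalIntegral.integral_const_mul, ← hmul,
    integral_comp_add_left (fun t => g t), add_zero]

theorem exists_eq_exp_of_map_add_eq_mul (hmul : ∀ x y, g (x + y) = g x * g y)
    (hg : LocallyIntegrable g volume) (hg0 : ∀ x, g x ≠ 0) :
    ∃ b : ℂ, ∀ x : ℝ, g x = Complex.exp (b * x) := by
  obtain ⟨a, hC⟩ := exists_intervalIntegral_ne_zero hg hg0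
  set C := ∫ t in (0 : ℝ)..a, g t
  set G : ℝ → ℂ := fun y => ∫ t in (0 : ℝ)..y, g t
  have hII (u v : ℝ) : IntervalIntegrable g volume u v :=
    (hg.integrableOn_isCompact isCompact_uIcc).intervalIntegrable
  have hrep : g = fun x => (G (x + a) - G x) * C⁻¹ := by
    funext x
    rw [integral_interval_sub_left (hII 0 (x + a)) (hII 0 x),
      ← mul_intervalIntegral_eq_of_map_add_eq_mul hmul, mul_inv_cancel_right₀ hC]
  have hcont : Continuous g := by
    have := continuous_primitive hII 0
    rw [hrep]
    fun_prop
  have hG (y : ℝ) : HasDerivAt G (g y) y := (hcont.integral_hasStrictDerivAt 0 y).hasDerivAt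
  have hderiv (x : ℝ) : HasDerivAt g ((g a - 1) * C⁻¹ * g x) x := by
    have h := (((hG (x + a)).comp_add_const x a).fun_sub (hG x)).mul_const C⁻¹
    rw [← hrep, hmul] at h
    exact h.congr_deriv (by ring)
  have hg1 : g 0 = 1 := by simpa [hg0 0] using (hmul 0 0).symm
  exact ⟨_, fun x => by rw [eq_mul_exp_of_hasDerivAt_mul hderiv x, hg1, one_mul]⟩

end CauchyExponential

theorem AddMonoidHom.eq_zero_of_forall_mem_zmultiples_s9 (h : ℝ →+ ℝ) {p : ℝ}
    (hp : ∀ x, h x ∈ AddSubgroup.zmultiples p) : h = 0 := by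
  ext x
  obtain ⟨n, hn⟩ := AddSubgroup.mem_zmultiples_iff.mp (hp x)
  by_contra hx
  have hn0 : n ≠ 0 := by rintro rfl; simp_all
  have hp0 : p ≠ 0 := by rintro rfl; simp_all
  obtain ⟨m, hm⟩ := AddSubgroup.mem_zmultiples_iff.mp (hp (x / (2 * n)))
  -- `h (x / 2n) = p / 2` is not an integer multiple of `p`
  have hhalf : h x = (2 * n) • h (x / (2 * n)) := by
    rw [← map_zsmul, zsmul_eq_mul]; push_cast; field_simp
  rw [← hm, ← hn, smul_smul] at hhalf
  have hcoef : (n : ℝ) = 2 * n * m := by simpa [zsmul_eq_mul, hp0] using hhalf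
  norm_cast at hcoef
  have : 2 * m = 1 := mul_left_cancel₀ hn0 (by linarith)
  omega

theorem stmt_9 (f : ℝ → ℝ) (hf : ∀ x y, f (x + y) = f x + f y)
    (hmeas : AEMeasurable (fun x => Complex.exp (Complex.I * (f x : ℂ)))
      MeasureTheory.volume) :
    ∃ c : ℝ, ∀ x, f x = c * x := by
  set g : ℝ → ℂ := fun x => Complex.exp (Complex.I * (f x : ℂ))
  have hmul (x y : ℝ) : g (x + y) = g x * g y := by
    simp only [g, hf, ← Complex.exp_add, Complex.ofReal_add, mul_add]
  have hint : LocallyIntegrable g volume :=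
    (locallyIntegrable_const (1 : ℝ)).mono hmeas.aestronglyMeasurable
      (ae_of_all _ fun x => by simp [g, mul_comm Complex.I])
  obtain ⟨b, hb⟩ := exists_eq_exp_of_map_add_eq_mul hmul hint fun _ => Complex.exp_ne_zero _
  let h : ℝ →+ ℝ := AddMonoidHom.mk' (fun x => f x - b.im * x) fun x y => by
    simp only [hf]; ring
  have hper (x : ℝ) : h x ∈ AddSubgroup.zmultiples (2 * Real.pi) := by
    obtain ⟨n, hn⟩ := Complex.exp_eq_exp_iff_exists_int.mp (hb x)
    have him : f x = b.im * x + n * (2 * Real.pi) := by simpa using congrArg Complex.im hn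
    refine AddSubgroup.mem_zmultiples_iff.mpr ⟨n, ?_⟩
    simp only [h, AddMonoidHom.mk'_apply, zsmul_eq_mul, him]
    ring
  refine ⟨b.im, fun x => ?_⟩
  have := DFunLike.congr_fun (h.eq_zero_of_forall_mem_zmultiples_s9 hper) x
  simp only [h, AddMonoidHom.mk'_apply, AddMonoidHom.zero_apply] at this
  linarith
end

section
/- If f : ℝⁿ → ℝᵐ is additive and for each coordinate function f_k (k = 1,...,m) the map x ↦ exp(i·f_k(x)) is Lebesgue measurable, then there exists an m×n real matrix A with f(x) = A·x for all x ∈ ℝⁿ. -/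
/-!
Each coordinate `g` of `f` is additive, so `χ = exp (i g)` is a character of `ℝⁿ`. Convolving a
locally integrable character with a bump function `φ` gives the continuous function
`(∫ φ χ) · χ`, and some bump pairs nontrivially with `χ`; hence `χ` is continuous. Near `0`
we then have `cos (g y / 2ʲ) > 0` for every `j`, and halving back from a tiny `g y / 2ʲ` keeps
`|g y| < π / 2`. An additive map bounded near `0` is continuous, hence `ℝ`-linear.
-/

open Real MeasureTheory
open scoped ContDiff Convolution

theorem continuous_of_map_add_eq_mul {E : Type*} [NormedAddCommGroup E] [NormedSpace ℝ E]
    [FiniteDimensional ℝ E] [MeasurableSpace E] [BorelSpace E] (μ : Measure E)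
    [μ.IsAddHaarMeasure] {χ : E → ℂ} (hχ : ∀ x y, χ (x + y) = χ x * χ y)
    (hloc : LocallyIntegrable χ μ) (hne : ¬ χ =ᵐ[μ] 0) : Continuous χ := by
  obtain ⟨φ, hφ, hφc, hc⟩ : ∃ φ : E → ℝ, ContDiff ℝ ∞ φ ∧ HasCompactSupport φ ∧
      ∫ x, φ x • χ x ∂μ ≠ 0 := by
    by_contra! h
    exact hne (ae_eq_zero_of_integral_contDiff_smul_eq_zero hloc h)
  set ψ : E → ℝ := fun x => φ (-x)
  have hψ : HasCompactSupport ψ := hφc.comp_homeomorph (Homeomorph.neg E)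
  have hconv : ∀ y,
      (ψ ⋆[ContinuousLinearMap.lsmul ℝ ℝ, μ] χ) y = (∫ x, φ x • χ x ∂μ) * χ y := by
    intro y
    rw [convolution_eq_swap, ← integral_add_right_eq_self _ y, ← integral_mul_const]
    simp [ψ, hχ, mul_comm, mul_left_comm]
  have hχ_eq : χ = fun y => (ψ ⋆[ContinuousLinearMap.lsmul ℝ ℝ, μ] χ) y / ∫ x, φ x • χ x ∂μ := by
    funext y
    rw [hconv, mul_div_cancel_left₀ _ hc]
  rw [hχ_eq]
  exact (hψ.continuous_convolution_left _ (hφ.continuous.comp continuous_neg) hloc).div_const _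

theorem cos_pos_of_norm_exp_I_mul_sub_one_lt_one {t : ℝ}
    (h : ‖Complex.exp (Complex.I * t) - 1‖ < 1) : 0 < cos t := by
  rw [Complex.norm_exp_I_mul_ofReal_sub_one, norm_mul, Real.norm_eq_abs, Real.norm_eq_abs,
    abs_two] at h
  have hcos : cos t = cos (t / 2) ^ 2 - sin (t / 2) ^ 2 := by rw [← cos_two_mul']; ring_nf
  nlinarith [sq_abs (sin (t / 2)), abs_nonneg (sin (t / 2)), sin_sq_add_cos_sq (t / 2)]

theorem abs_lt_pi_div_two_of_cos_pos_of_abs_lt_pi {s : ℝ} (hcos : 0 < cos s) (hs : |s| < π) :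
    |s| < π / 2 := by
  obtain ⟨hs₁, hs₂⟩ := abs_lt.1 hs
  have := Real.Angle.cos_pos_iff_abs_toReal_lt_pi_div_two (θ := (s : Real.Angle))
  rw [Real.Angle.cos_coe, Real.Angle.toReal_coe_eq_self_iff.2 ⟨hs₁, hs₂.le⟩] at this
  exact this.1 hcos

theorem abs_lt_pi_div_two_of_forall_cos_div_two_pow_pos {t : ℝ}
    (h : ∀ j : ℕ, 0 < cos (t / 2 ^ j)) : |t| < π / 2 := by
  have step : ∀ d j : ℕ, |t / 2 ^ (j + d)| < π / 2 → |t / 2 ^ j| < π / 2 := by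
    intro d
    induction d with
    | zero => simp
    | succ d ih =>
      intro j hj
      refine abs_lt_pi_div_two_of_cos_pos_of_abs_lt_pi (h j) ?_
      have : |t / 2 ^ (j + 1)| < π / 2 := ih (j + 1) (by rwa [add_right_comm])
      rw [pow_succ, ← div_div, abs_div, abs_two] at this
      linarith
  obtain ⟨N, hN⟩ := pow_unbounded_of_one_lt (|t| / (π / 2)) one_lt_two
  have hsmall : |t / 2 ^ (0 + N)| < π / 2 := by
    rw [zero_add, abs_div, abs_pow, abs_two, div_lt_iff₀ (by positivity)]
    rw [div_lt_iff₀ (by positivity)] at hN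
    linarith
  simpa using step N 0 hsmall

theorem AddMonoidHom.continuous_of_continuous_exp_mul_I {E : Type*} [NormedAddCommGroup E]
    [NormedSpace ℝ E] (g : E →+ ℝ) (hg : Continuous fun x => Complex.exp (Complex.I * g x)) :
    Continuous g := by
  obtain ⟨δ, hδ, hball⟩ := Metric.continuousAt_iff.1 hg.continuousAt 1 one_pos
  have hbound : ∀ y ∈ Metric.ball (0 : E) δ, g y ∈ Metric.closedBall 0 (π / 2) := by
    intro y hy
    rw [mem_closedBall_zero_iff, Real.norm_eq_abs]
    refine (abs_lt_pi_div_two_of_forall_cos_div_two_pow_pos fun j => ?_).le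
    have hyj : ((2 ^ j : ℕ) : ℝ)⁻¹ • y ∈ Metric.ball (0 : E) δ := by
      rw [mem_ball_zero_iff] at hy ⊢
      refine lt_of_le_of_lt ?_ hy
      rw [norm_smul]
      refine mul_le_of_le_one_left (norm_nonneg y) ?_
      rw [norm_inv, Nat.cast_pow, Nat.cast_ofNat, norm_pow, Real.norm_two]
      exact inv_le_one_of_one_le₀ (one_le_pow₀ one_le_two)
    have := hball hyj
    rw [map_inv_natCast_smul g ℝ ℝ, map_zero, Complex.ofReal_zero, mul_zero, Complex.exp_zero,
      Complex.dist_eq] at this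
    simpa [div_eq_inv_mul] using cos_pos_of_norm_exp_I_mul_sub_one_lt_one this
  exact g.continuous_of_isBounded_nhds_zero (Metric.ball_mem_nhds 0 hδ)
    (Metric.isBounded_closedBall.subset (Set.image_subset_iff.2 hbound))

theorem AddMonoidHom.continuous_of_aemeasurable_exp_mul_I {E : Type*} [NormedAddCommGroup E]
    [NormedSpace ℝ E] [FiniteDimensional ℝ E] [MeasurableSpace E] [BorelSpace E]
    (μ : Measure E) [μ.IsAddHaarMeasure] (g : E →+ ℝ)
    (hg : AEMeasurable (fun x => Complex.exp (Complex.I * g x)) μ) : Continuous g := by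
  refine g.continuous_of_continuous_exp_mul_I (continuous_of_map_add_eq_mul μ ?_ ?_ ?_)
  · intro x y
    rw [map_add, Complex.ofReal_add, mul_add, Complex.exp_add]
  · refine (locallyIntegrable_const (1 : ℂ)).mono hg.aestronglyMeasurable
      (ae_of_all _ fun x => ?_)
    rw [Complex.norm_exp_I_mul_ofReal, norm_one]
  · intro h
    obtain ⟨x, hx⟩ := h.exists
    exact Complex.exp_ne_zero _ hx

theorem stmt_14 (n m : ℕ) (f : (Fin n → ℝ) → (Fin m → ℝ))
    (hf : ∀ x y, f (x + y) = f x + f y)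
    (hmeas : ∀ k : Fin m,
      AEMeasurable (fun x => Complex.exp (Complex.I * (f x k : ℂ))) volume) :
    ∃ A : Matrix (Fin m) (Fin n) ℝ, ∀ x, f x = A.mulVec x := by
  set F := AddMonoidHom.mk' f hf
  have hF : Continuous F := continuous_pi fun k =>
    ((Pi.evalAddMonoidHom _ k).comp F).continuous_of_aemeasurable_exp_mul_I volume (hmeas k)
  set L := (F.toRealLinearMap hF).toLinearMap
  exact ⟨LinearMap.toMatrix' L, fun x => (LinearMap.toMatrix'_mulVec L x).symm⟩
end

section
/- If g : ℝ → ℝ is additive, periodic with period 1, and x ↦ exp(i·α·g(x)) has zero integral over [0,1] for every positive rational α, then a contradiction arises: in fact there exists a positive rational α with ∫₀¹ exp(i·α·g(x)) dx ≠ 0, provided exp(i·g) is measurable. -/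
/-!
Suppose every integral vanishes and put `F = exp (i g)`. Additivity makes `g` `ℚ`-linear, so
`exp (i α g x) = F (α x)` and the substitution `y = α x` turns the hypothesis into
`∫₀^α F = 0` for every rational `α ∈ (0, 1)`. The primitive of `F` is continuous, so it vanishes
on all of `(0, 1)`; by the Lebesgue differentiation theorem `F = 0` almost everywhere on
`(0, 1)`, which is absurd since `|F| = 1`.
-/

open MeasureTheory Set

section Primitive

variable {E : Type*} [NormedAddCommGroup E] [NormedSpace ℝ E] {f : ℝ → E} {a b : ℝ}

theorem integral_Icc_zero_one_comp_mul_left (f : ℝ → E) {c : ℝ} (hc : c ≠ 0) :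
    ∫ x in Icc (0 : ℝ) 1, f (c * x) = c⁻¹ • ∫ x in 0..c, f x := by
  rw [integral_Icc_eq_integral_Ioc, ← intervalIntegral.integral_of_le zero_le_one,
    intervalIntegral.integral_comp_mul_left f hc, mul_zero, mul_one]

theorem primitive_eq_zero_on_Ioo_of_forall_rat (hf : IntervalIntegrable f volume a b)
    (h : ∀ q : ℚ, (q : ℝ) ∈ Ioo a b → ∫ x in a..(q : ℝ), f x = 0) :
    ∀ t ∈ Ioo a b, ∫ x in a..t, f x = 0 := by
  have hcont : ContinuousOn (fun t => ∫ x in a..t, f x) (Ioo a b) :=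
    (intervalIntegral.continuousOn_primitive_interval' hf left_mem_uIcc).mono
      (Ioo_subset_Icc_self.trans Icc_subset_uIcc)
  have hdense : Ioo a b ⊆ closure (Ioo a b ∩ range ((↑) : ℚ → ℝ)) :=
    Rat.denseRange_cast.open_subset_closure_inter isOpen_Ioo
  refine EqOn.of_subset_closure ?_ hcont continuousOn_const inter_subset_left hdense
  rintro _ ⟨hq, q, rfl⟩
  exact h q hq

theorem ae_eq_zero_on_Ioo_of_primitive_eq_zero [CompleteSpace E] (hf : IntervalIntegrable f volume a b)
    (h : ∀ t ∈ Ioo a b, ∫ x in a..t, f x = 0) : ∀ᵐ x, x ∈ Ioo a b → f x = 0 := by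
  filter_upwards [hf.ae_hasDerivAt_integral] with x hderiv hx
  have hab : a ≤ b := (hx.1.trans hx.2).le
  have hx' : x ∈ uIcc a b := by
    rw [uIcc_of_le hab]
    exact Ioo_subset_Icc_self hx
  have hzero : HasDerivAt (fun t => ∫ s in a..t, f s) 0 x :=
    (hasDerivAt_const x (0 : E)).congr_of_eventuallyEq
      (Filter.eventually_of_mem (Ioo_mem_nhds hx.1 hx.2) h)
  exact (hderiv hx' a left_mem_uIcc).unique hzero

end Primitive

theorem stmt_16_general (g : ℝ → ℝ) (hg : ∀ x y, g (x + y) = g x + g y)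
    (hmeas : AEMeasurable (fun x => Complex.exp (Complex.I * (g x : ℂ)))
      (volume.restrict (Set.Icc (0 : ℝ) 1))) :
    ∃ α : ℚ, 0 < α ∧
      ∫ x in Set.Icc (0 : ℝ) 1, Complex.exp (Complex.I * ((α : ℝ) * g x : ℝ)) ≠ 0 := by
  by_contra! hzero
  set F : ℝ → ℂ := fun x => Complex.exp (Complex.I * (g x : ℂ))
  have hF_int : IntervalIntegrable F volume 0 1 := by
    refine (intervalIntegrable_iff_integrableOn_Ioc_of_le zero_le_one).2 ?_
    have hF_Icc : IntegrableOn F (Icc 0 1) :=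
      Integrable.mono' (integrable_const 1) hmeas.aestronglyMeasurable
        (Filter.Eventually.of_forall fun x => by simp [F, Complex.norm_exp])
    exact hF_Icc.mono_set Ioc_subset_Icc_self
  have hrat : ∀ q : ℚ, (q : ℝ) ∈ Ioo 0 1 → ∫ x in 0..(q : ℝ), F x = 0 := by
    intro q hq
    have hq0 : (q : ℝ) ≠ 0 := hq.1.ne'
    have hscale : ∀ x, g ((q : ℝ) * x) = (q : ℝ) * g x := fun x => by
      simpa using map_ratCast_smul (AddMonoidHom.mk' g hg) ℝ ℝ q x
    have h := hzero q (by exact_mod_cast hq.1)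
    simp_rw [← hscale] at h
    rw [integral_Icc_zero_one_comp_mul_left F hq0] at h
    exact (smul_eq_zero.mp h).resolve_left (inv_ne_zero hq0)
  have hae := ae_eq_zero_on_Ioo_of_primitive_eq_zero hF_int
    (primitive_eq_zero_on_Ioo_of_forall_rat hF_int hrat)
  have hnull : volume (Ioo (0 : ℝ) 1) = 0 :=
    measure_eq_zero_iff_ae_notMem.2 (hae.mono fun x hx hmem => Complex.exp_ne_zero _ (hx hmem))
  simp at hnull

theorem stmt_16 (g : ℝ → ℝ) (hg : ∀ x y, g (x + y) = g x + g y)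
    (hper : ∀ x, g (x + 1) = g x)
    (hmeas : AEMeasurable (fun x => Complex.exp (Complex.I * (g x : ℂ)))
      (volume.restrict (Set.Icc (0 : ℝ) 1))) :
    ∃ α : ℚ, 0 < α ∧
      ∫ x in Set.Icc (0 : ℝ) 1, Complex.exp (Complex.I * ((α : ℝ) * g x : ℝ)) ≠ 0 :=
  stmt_16_general g hg hmeas
end

section
/- If f : ℝ → ℝ is additive and bounded on a Lebesgue measurable set E of positive measure, then f(x) = f(1)·x for all x ∈ ℝ. -/
open MeasureTheory Bornology Set

open scoped Pointwise

/-- **Kestelman's criterion**: by Steinhaus' theorem `E - E` is a neighbourhood of `0`, and `f` is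
bounded on it, which forces continuity of an additive map. -/
theorem AddMonoidHom.continuous_of_isBounded_image_of_measure_pos {G H : Type*}
    [SeminormedAddCommGroup G] [MeasurableSpace G] [BorelSpace G] [LocallyCompactSpace G]
    [SeminormedAddCommGroup H] [NormedSpace ℝ H] (μ : Measure G) [μ.IsAddHaarMeasure]
    [μ.InnerRegular] (f : G →+ H) {E : Set G} (hE : MeasurableSet E) (hpos : 0 < μ E)
    (hbd : IsBounded (f '' E)) : Continuous f :=
  f.continuous_of_isBounded_nhds_zero (Measure.sub_mem_nhds_zero_of_addHaar_pos μ E hE hpos)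
    (by rw [image_sub]; exact hbd.sub hbd)

theorem stmt_19 (f : ℝ → ℝ) (hf : ∀ x y, f (x + y) = f x + f y)
    (E : Set ℝ) (hE : MeasurableSet E) (hpos : 0 < volume E)
    (M : ℝ) (hbd : ∀ x ∈ E, |f x| ≤ M) :
    ∀ x, f x = f 1 * x := by
  intro x
  let F : ℝ →+ ℝ := AddMonoidHom.mk' f hf
  have hbounded : IsBounded (F '' E) :=
    (Metric.isBounded_closedBall (x := 0) (r := M)).subset <| by
      rintro _ ⟨y, hy, rfl⟩
      simpa [F] using hbd y hy
  have hF : Continuous F := F.continuous_of_isBounded_image_of_measure_pos volume hE hpos hbounded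
  simpa [F, mul_comm] using map_real_smul F hF x 1
end
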